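/- Given a contraction (φ, ψ, h) of commutative dg algebras from (A, d_A) onto (B, d_B) in which ψ is an algebra morphism, the four identities h((−1)^{|a|+1}h(a)b + a h(b)) = h(a)h(b), h(a ψ(x)) = h(a)ψ(x), φ((−1)^{|a|+1}h(a)b + a h(b)) = 0, φ(a ψ(x)) = φ(a)x (for all homogeneous a,b ∈ A, x,y ∈ B) are equivalent to Real's conditions: h(h(a)h(b)) = 0, h(h(a)ψ(x)) = 0, φ(h(a)h(b)) = 0, φ(h(a)ψ(x)) = 0. -/

import Mathlib

/-!
Write (R1)–(R4) for Real's conditions, in the order of the statement. Every element decomposes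
as `a = ψ φ a - h dA a - dA h a`. Substituting this into one factor of a product and applying
`h` or `φ`, the conditions (R1)–(R4) kill the `ψ φ`- and `h dA`-parts (`ψ` is multiplicative and
`A` is commutative), and the Leibniz rule for `h a * -` turns the `dA h`-part into
`dA (h a * v)`, which `h` sends to `-(h a * v)` and `φ` to `dB (φ (h a * v)) = 0`, because
(R1)–(R4) put `h a * v` in the kernels of `h` and `φ`. Conversely, (R1)–(R4) are the four
identities at `b := h b` and `a := h a`, as `h h = 0` and `φ h = 0`.
-/

section Contraction

variable {R A B : Type*} [Semiring R] [CommRing A] [CommRing B] [Module R A] [Module R B]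
  {dA : A →ₗ[R] A} {dB : B →ₗ[R] B} {φ : A →ₗ[R] B} {ψ : B →ₗ[R] A} {h : A →ₗ[R] A}

theorem map_mul_eq_of_homotopy {F M : Type*} [AddCommGroup M] [FunLike F A M]
    [AddMonoidHomClass F A M] (T : F) (hhom : ∀ a, h (dA a) + dA (h a) = ψ (φ a) - a)
    (a v : A) : T (a * v) = T (ψ (φ a) * v) - T (h (dA a) * v) - T (dA (h a) * v) := by
  rw [← map_sub, ← map_sub]
  congr 1
  linear_combination v * hhom a

theorem map_dA_mul_eq_of_leibniz {F M : Type*} [AddCommGroup M] [FunLike F A M]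
    [AddMonoidHomClass F A M] (T : F) {ε : ℤˣ} {u : A}
    (hL : ∀ v, dA (u * v) = dA u * v + (ε : ℤ) • (u * dA v)) (v : A) :
    T (dA u * v) = T (dA (u * v)) - (ε : ℤ) • T (u * dA v) := by
  rw [hL, map_add, map_zsmul, add_sub_cancel_right]

theorem h_dA_eq_neg_of_mem_ker (hhom : ∀ a, h (dA a) + dA (h a) = ψ (φ a) - a) {c : A}
    (hφc : φ c = 0) (hhc : h c = 0) : h (dA c) = -c := by
  simpa [hφc, hhc] using hhom c

theorem h_mul_ψ_eq (hhom : ∀ a, h (dA a) + dA (h a) = ψ (φ a) - a) {ε : ℤˣ} {a : A}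
    (hL : ∀ v, dA (h a * v) = dA (h a) * v + (ε : ℤ) • (h a * dA v))
    (hψmul : ∀ x y, ψ (x * y) = ψ x * ψ y) (hhψ : ∀ x, h (ψ x) = 0)
    (hψd : ∀ x, ψ (dB x) = dA (ψ x)) (R2 : ∀ a x, h (h a * ψ x) = 0)
    (R4 : ∀ a x, φ (h a * ψ x) = 0) (x : B) : h (a * ψ x) = h a * ψ x := by
  rw [map_mul_eq_of_homotopy h hhom, ← hψmul, hhψ, R2, map_dA_mul_eq_of_leibniz h hL,
    h_dA_eq_neg_of_mem_ker hhom (R4 a x) (R2 a x), ← hψd, R2, smul_zero]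
  abel

theorem φ_mul_ψ_eq (hhom : ∀ a, h (dA a) + dA (h a) = ψ (φ a) - a) {ε : ℤˣ} {a : A}
    (hL : ∀ v, dA (h a * v) = dA (h a) * v + (ε : ℤ) • (h a * dA v))
    (hψmul : ∀ x y, ψ (x * y) = ψ x * ψ y) (hφψ : ∀ x, φ (ψ x) = x)
    (hφd : ∀ a, φ (dA a) = dB (φ a)) (hψd : ∀ x, ψ (dB x) = dA (ψ x))
    (R4 : ∀ a x, φ (h a * ψ x) = 0) (x : B) : φ (a * ψ x) = φ a * x := by
  rw [map_mul_eq_of_homotopy φ hhom, ← hψmul, hφψ, R4, map_dA_mul_eq_of_leibniz φ hL, hφd, R4,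
    ← hψd, R4, map_zero, smul_zero]
  abel

theorem h_zsmul_h_mul_add_mul_h_eq
    (hhom : ∀ a, h (dA a) + dA (h a) = ψ (φ a) - a) {ε : ℤˣ} {a : A}
    (hL : ∀ v, dA (h a * v) = dA (h a) * v + (ε : ℤ) • (h a * dA v))
    (R1 : ∀ a b, h (h a * h b) = 0) (R2 : ∀ a x, h (h a * ψ x) = 0)
    (R3 : ∀ a b, φ (h a * h b) = 0) (b : A) :
    h ((ε : ℤ) • (h a * b) + a * h b) = h a * h b := by
  have hdha : h (dA (h a) * h b) = -h (a * h b) := by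
    have := map_mul_eq_of_homotopy h hhom a (h b)
    rw [mul_comm (ψ _), R2, R1] at this
    linear_combination this
  have hε : (ε : ℤ) • h (h a * dA (h b)) = h (a * h b) - h a * h b := by
    have := map_dA_mul_eq_of_leibniz h hL (h b)
    rw [hdha, h_dA_eq_neg_of_mem_ker hhom (R3 a b) (R1 a b)] at this
    rw [eq_sub_iff_add_eq, ← neg_inj, this]
    abel
  have hhab : h (h a * b) = -h (h a * dA (h b)) := by
    rw [mul_comm, map_mul_eq_of_homotopy h hhom b, mul_comm (ψ _), R2, mul_comm (h _), R1,
      mul_comm (dA _)]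
    abel
  rw [map_add, map_zsmul, hhab, smul_neg, hε]
  abel

theorem φ_zsmul_h_mul_add_mul_h_eq_zero
    (hhom : ∀ a, h (dA a) + dA (h a) = ψ (φ a) - a) {ε : ℤˣ} {a : A}
    (hL : ∀ v, dA (h a * v) = dA (h a) * v + (ε : ℤ) • (h a * dA v))
    (hφd : ∀ a, φ (dA a) = dB (φ a))
    (R3 : ∀ a b, φ (h a * h b) = 0) (R4 : ∀ a x, φ (h a * ψ x) = 0) (b : A) :
    φ ((ε : ℤ) • (h a * b) + a * h b) = 0 := by
  have hdha : φ (dA (h a) * h b) = -φ (a * h b) := by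
    have := map_mul_eq_of_homotopy φ hhom a (h b)
    rw [mul_comm (ψ _), R4, R3] at this
    linear_combination this
  have hε : (ε : ℤ) • φ (h a * dA (h b)) = φ (a * h b) := by
    have := map_dA_mul_eq_of_leibniz φ hL (h b)
    rw [hdha, hφd, R3, map_zero, zero_sub, neg_inj] at this
    exact this.symm
  have hφab : φ (h a * b) = -φ (h a * dA (h b)) := by
    rw [mul_comm, map_mul_eq_of_homotopy φ hhom b, mul_comm (ψ _), R4, mul_comm (h _), R3,
      mul_comm (dA _)]
    abel
  rw [map_add, map_zsmul, hφab, smul_neg, hε, neg_add_cancel]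

theorem map_h_mul_h_eq_zero {F M : Type*} [AddCommGroup M] [FunLike F A M]
    [AddMonoidHomClass F A M] (T : F) {𝒜 : ℤ → Submodule R A} (h𝒜top : ⨆ i, 𝒜 i = ⊤)
    (hh2 : ∀ a, h (h a) = 0)
    (H : ∀ i, ∀ a ∈ 𝒜 i, ∀ b, T (((i + 1).negOnePow : ℤ) • (h a * h b) + a * h (h b)) = 0)
    (a b : A) : T (h a * h b) = 0 := by
  refine Submodule.iSup_induction 𝒜 (motive := fun a => T (h a * h b) = 0)
    (h𝒜top ▸ Submodule.mem_top) (fun i a ha => ?_) (by simp)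
    fun x y hx hy => by rw [map_add, add_mul, map_add, hx, hy, add_zero]
  have := H i a ha b
  rwa [hh2, mul_zero, add_zero, map_zsmul, ← Units.smul_def, smul_eq_zero_iff_eq] at this

theorem dA_h_mul_eq {𝒜 : ℤ → Submodule R A} (hhdeg : ∀ i, ∀ a ∈ 𝒜 i, h a ∈ 𝒜 (i - 1))
    (hLeibniz : ∀ i, ∀ a ∈ 𝒜 i, ∀ b, dA (a * b) = dA a * b + (i.negOnePow : ℤ) • (a * dA b))
    {i : ℤ} {a : A} (ha : a ∈ 𝒜 i) (v : A) :
    dA (h a * v) = dA (h a) * v + ((i + 1).negOnePow : ℤ) • (h a * dA v) := by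
  rw [hLeibniz (i - 1) (h a) (hhdeg i a ha), Int.negOnePow_sub, Int.negOnePow_add]

end Contraction

theorem statement_12_general {A B : Type*} [CommRing A] [CommRing B]
    [Algebra ℝ A] [Algebra ℝ B]
    (𝒜 : ℤ → Submodule ℝ A)
    (dA : A →ₗ[ℝ] A) (dB : B →ₗ[ℝ] B)
    (φ : A →ₗ[ℝ] B) (ψ : B →ₗ[ℝ] A) (h : A →ₗ[ℝ] A)
    -- gradings
    (h𝒜top : (⨆ i, 𝒜 i) = ⊤)
    -- degrees of the structure maps
    (hhdeg : ∀ i, ∀ a ∈ 𝒜 i, h a ∈ 𝒜 (i - 1))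
    -- dg algebra structure
    (hLeibnizA : ∀ i, ∀ a ∈ 𝒜 i, ∀ b : A,
      dA (a * b) = dA a * b + (Int.negOnePow i : ℤ) • (a * dA b))
    -- contraction data
    (hφchain : φ.comp dA = dB.comp φ) (hψchain : ψ.comp dB = dA.comp ψ)
    (hφψ : φ.comp ψ = LinearMap.id)
    (hhomotopy : h.comp dA + dA.comp h = ψ.comp φ - LinearMap.id)
    (hφh : φ.comp h = 0) (hhψ : h.comp ψ = 0) (hh2 : h.comp h = 0)
    -- ψ is an algebra morphism
    (hψmul : ∀ x y : B, ψ (x * y) = ψ x * ψ y) :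
    ((∀ i, ∀ a ∈ 𝒜 i, ∀ b : A,
        h ((Int.negOnePow (i + 1) : ℤ) • (h a * b) + a * h b) = h a * h b) ∧
     (∀ (a : A) (x : B), h (a * ψ x) = h a * ψ x) ∧
     (∀ i, ∀ a ∈ 𝒜 i, ∀ b : A,
        φ ((Int.negOnePow (i + 1) : ℤ) • (h a * b) + a * h b) = 0) ∧
     (∀ (a : A) (x : B), φ (a * ψ x) = φ a * x))
    ↔
    ((∀ a b : A, h (h a * h b) = 0) ∧
     (∀ (a : A) (x : B), h (h a * ψ x) = 0) ∧
     (∀ a b : A, φ (h a * h b) = 0) ∧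
     (∀ (a : A) (x : B), φ (h a * ψ x) = 0)) := by
  have Hhom : ∀ a, h (dA a) + dA (h a) = ψ (φ a) - a := fun a => by
    simpa using LinearMap.congr_fun hhomotopy a
  have Hφh : ∀ a, φ (h a) = 0 := fun a => by simpa using LinearMap.congr_fun hφh a
  have Hhψ : ∀ x, h (ψ x) = 0 := fun x => by simpa using LinearMap.congr_fun hhψ x
  have Hh2 : ∀ a, h (h a) = 0 := fun a => by simpa using LinearMap.congr_fun hh2 a
  have Hφψ : ∀ x, φ (ψ x) = x := LinearMap.congr_fun hφψ
  have Hφd : ∀ a, φ (dA a) = dB (φ a) := LinearMap.congr_fun hφchain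
  have Hψd : ∀ x, ψ (dB x) = dA (ψ x) := LinearMap.congr_fun hψchain
  have hL := fun i a (ha : a ∈ 𝒜 i) => dA_h_mul_eq hhdeg hLeibnizA ha
  have mem_iSup (a : A) : a ∈ ⨆ i, 𝒜 i := h𝒜top ▸ Submodule.mem_top
  constructor
  · rintro ⟨H1, H2, H3, H4⟩
    exact ⟨map_h_mul_h_eq_zero h h𝒜top Hh2 fun i a ha b => by rw [H1 i a ha, Hh2, mul_zero],
      fun a x => by rw [H2, Hh2, zero_mul],
      map_h_mul_h_eq_zero φ h𝒜top Hh2 fun i a ha b => H3 i a ha (h b),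
      fun a x => by rw [H4, Hφh, zero_mul]⟩
  · rintro ⟨R1, R2, R3, R4⟩
    refine ⟨fun i a ha => h_zsmul_h_mul_add_mul_h_eq Hhom (hL i a ha) R1 R2 R3, fun a x => ?_,
      fun i a ha => φ_zsmul_h_mul_add_mul_h_eq_zero Hhom (hL i a ha) Hφd R3 R4, fun a x => ?_⟩
    · refine Submodule.iSup_induction 𝒜 (motive := fun a => h (a * ψ x) = h a * ψ x) (mem_iSup a)
        (fun i a ha => h_mul_ψ_eq Hhom (hL i a ha) hψmul Hhψ Hψd R2 R4 x) (by simp)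
        fun u v hu hv => by rw [add_mul, map_add, map_add, hu, hv, add_mul]
    · refine Submodule.iSup_induction 𝒜 (motive := fun a => φ (a * ψ x) = φ a * x) (mem_iSup a)
        (fun i a ha => φ_mul_ψ_eq Hhom (hL i a ha) hψmul Hφψ Hφd Hψd R4 x) (by simp)
        fun u v hu hv => by rw [add_mul, map_add, map_add, hu, hv, add_mul]

/-- **Equivalence of the semifull-contraction identities with Real's conditions.**
Given a contraction `(φ, ψ, h)` of graded commutative dg algebras from
`(A, d_A)` onto `(B, d_B)` in which `ψ` is an algebra morphism, the four
identities
`h((−1)^{|a|+1} h(a)b + a h(b)) = h(a)h(b)`,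
`h(a ψ(x)) = h(a) ψ(x)`,
`φ((−1)^{|a|+1} h(a)b + a h(b)) = 0`,
`φ(a ψ(x)) = φ(a) x`
are equivalent to Real's conditions
`h(h(a)h(b)) = 0`, `h(h(a)ψ(x)) = 0`, `φ(h(a)h(b)) = 0`, `φ(h(a)ψ(x)) = 0`. -/
theorem statement_12 {A B : Type*} [CommRing A] [CommRing B]
    [Algebra ℝ A] [Algebra ℝ B]
    (𝒜 : ℤ → Submodule ℝ A) (ℬ : ℤ → Submodule ℝ B)
    (dA : A →ₗ[ℝ] A) (dB : B →ₗ[ℝ] B)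
    (φ : A →ₗ[ℝ] B) (ψ : B →ₗ[ℝ] A) (h : A →ₗ[ℝ] A)
    -- gradings
    (h𝒜top : (⨆ i, 𝒜 i) = ⊤) (hℬtop : (⨆ i, ℬ i) = ⊤)
    (h𝒜mul : ∀ i j, ∀ a ∈ 𝒜 i, ∀ b ∈ 𝒜 j, a * b ∈ 𝒜 (i + j))
    (hℬmul : ∀ i j, ∀ x ∈ ℬ i, ∀ y ∈ ℬ j, x * y ∈ ℬ (i + j))
    (h𝒜comm : ∀ i j, ∀ a ∈ 𝒜 i, ∀ b ∈ 𝒜 j,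
      a * b = (Int.negOnePow (i * j) : ℤ) • (b * a))
    -- degrees of the structure maps
    (hdAdeg : ∀ i, ∀ a ∈ 𝒜 i, dA a ∈ 𝒜 (i + 1))
    (hdBdeg : ∀ i, ∀ x ∈ ℬ i, dB x ∈ ℬ (i + 1))
    (hhdeg : ∀ i, ∀ a ∈ 𝒜 i, h a ∈ 𝒜 (i - 1))
    (hφdeg : ∀ i, ∀ a ∈ 𝒜 i, φ a ∈ ℬ i)
    (hψdeg : ∀ i, ∀ x ∈ ℬ i, ψ x ∈ 𝒜 i)
    -- dg algebra structure
    (hdA2 : dA.comp dA = 0) (hdB2 : dB.comp dB = 0)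
    (hLeibnizA : ∀ i, ∀ a ∈ 𝒜 i, ∀ b : A,
      dA (a * b) = dA a * b + (Int.negOnePow i : ℤ) • (a * dA b))
    (hLeibnizB : ∀ i, ∀ x ∈ ℬ i, ∀ y : B,
      dB (x * y) = dB x * y + (Int.negOnePow i : ℤ) • (x * dB y))
    -- contraction data
    (hφchain : φ.comp dA = dB.comp φ) (hψchain : ψ.comp dB = dA.comp ψ)
    (hφψ : φ.comp ψ = LinearMap.id)
    (hhomotopy : h.comp dA + dA.comp h = ψ.comp φ - LinearMap.id)
    (hφh : φ.comp h = 0) (hhψ : h.comp ψ = 0) (hh2 : h.comp h = 0)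
    -- ψ is an algebra morphism
    (hψmul : ∀ x y : B, ψ (x * y) = ψ x * ψ y) :
    ((∀ i, ∀ a ∈ 𝒜 i, ∀ b : A,
        h ((Int.negOnePow (i + 1) : ℤ) • (h a * b) + a * h b) = h a * h b) ∧
     (∀ (a : A) (x : B), h (a * ψ x) = h a * ψ x) ∧
     (∀ i, ∀ a ∈ 𝒜 i, ∀ b : A,
        φ ((Int.negOnePow (i + 1) : ℤ) • (h a * b) + a * h b) = 0) ∧
     (∀ (a : A) (x : B), φ (a * ψ x) = φ a * x))
    ↔
    ((∀ a b : A, h (h a * h b) = 0) ∧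
     (∀ (a : A) (x : B), h (h a * ψ x) = 0) ∧
     (∀ a b : A, φ (h a * h b) = 0) ∧
     (∀ (a : A) (x : B), φ (h a * ψ x) = 0)) :=
  statement_12_general 𝒜 dA dB φ ψ h h𝒜top hhdeg hLeibnizA hφchain hψchain hφψ hhomotopy hφh hhψ hh2
    hψmul
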